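/- arXiv:2202.06514 — 2 statements merged into one kernel-verified Lean document; each statement's English description precedes it below -/
import Mathlib

section
/- Let F be a field, α ∈ F^×, and x, y ∈ F not both zero with b := x² − α y² ≠ 0. Then the symbol {α, b} lies in 2·K₂F, i.e. {α, b} is divisible by 2 in the Milnor K-group K₂F. -/
open TensorProduct

/-- The Steinberg submodule of `Fˣ ⊗ Fˣ`: spanned by `a ⊗ (1 - a)` for `a ≠ 1`. -/
def steinberg (F : Type*) [Field F] :
    Submodule ℤ (Additive Fˣ ⊗[ℤ] Additive Fˣ) :=
  Submodule.span ℤ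
    { z | ∃ (a : Fˣ) (h : (a : F) ≠ 1),
        z = Additive.ofMul a ⊗ₜ[ℤ]
            Additive.ofMul (Units.mk0 (1 - (a : F)) (sub_ne_zero.mpr h.symm)) }

/-- The Milnor K-group `K₂ F`. -/
def K2 (F : Type*) [Field F] :=
  (Additive Fˣ ⊗[ℤ] Additive Fˣ) ⧸ steinberg F

noncomputable instance (F : Type*) [Field F] : AddCommGroup (K2 F) :=
  inferInstanceAs (AddCommGroup ((Additive Fˣ ⊗[ℤ] Additive Fˣ) ⧸ steinberg F))

/-- The symbol `{a, b}` in `K₂ F`. -/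
noncomputable def symbol {F : Type*} [Field F] (a b : Fˣ) : K2 F :=
  Submodule.Quotient.mk (Additive.ofMul a ⊗ₜ[ℤ] Additive.ofMul b)

/-!
For `y ≠ 0` write `x² - αy² = y²(c² - α)` with `c = x / y`; then it suffices that
`{α, c² - α}` is divisible by `2`. For `c = 0` this is `{α, -α} = 0`, and for `c ≠ 0` it comes from
expanding the Steinberg relation `{α/c², (c² - α)/c²} = 0` bilinearly.
-/

namespace K2

variable {F : Type*} [Field F]

theorem symbol_mul_left (a b c : Fˣ) : symbol (a * b) c = symbol a c + symbol b c := by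
  rw [symbol, ofMul_mul, add_tmul]
  exact Submodule.Quotient.mk_add _

theorem symbol_mul_right (a b c : Fˣ) : symbol a (b * c) = symbol a b + symbol a c := by
  rw [symbol, ofMul_mul, tmul_add]
  exact Submodule.Quotient.mk_add _

theorem symbol_mul_self_right (a b : Fˣ) : symbol a (b * b) = 2 • symbol a b := by
  rw [symbol_mul_right, two_smul]

theorem symbol_one_left (c : Fˣ) : symbol (1 : Fˣ) c = 0 := by
  rw [symbol, ofMul_one, zero_tmul]
  exact Submodule.Quotient.mk_zero _

theorem symbol_inv_left (a c : Fˣ) : symbol a⁻¹ c = -symbol a c := by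
  rw [eq_neg_iff_add_eq_zero, ← symbol_mul_left, inv_mul_cancel, symbol_one_left]

theorem symbol_eq_zero_of_add_eq_one {a b : Fˣ} (h : (a : F) + b = 1) : symbol a b = 0 := by
  have ha : (a : F) ≠ 1 := fun ha => b.ne_zero (by linear_combination h - ha)
  have hb : Units.mk0 (1 - (a : F)) (sub_ne_zero.mpr ha.symm) = b :=
    Units.ext (by simp only [Units.val_mk0]; linear_combination -h)
  rw [← hb]
  exact (Submodule.Quotient.mk_eq_zero _).mpr (Submodule.subset_span ⟨a, ha, rfl⟩)

theorem symbol_neg_self (a : Fˣ) : symbol a (-a) = 0 := by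
  by_cases ha : (a : F) = 1
  · rw [show a = 1 from Units.ext ha, symbol_one_left]
  set u := Units.mk0 (1 - (a : F)) (sub_ne_zero.mpr (Ne.symm ha))
  set v := Units.mk0 (1 - (a : F)⁻¹) (sub_ne_zero.mpr (Ne.symm (inv_ne_one.mpr ha)))
  -- `-a · (1 - a⁻¹) = 1 - a`, and both `1 - a⁻¹` and `1 - a` pair trivially with `a`.
  have hneg : -a * v = u := Units.ext <| by
    simp only [u, v, Units.val_neg, Units.val_mul, Units.val_mk0]
    field_simp
    ring
  have hu : symbol a u = 0 := symbol_eq_zero_of_add_eq_one (by simp [u])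
  have hv : symbol a v = 0 := by
    rw [← neg_eq_zero, ← symbol_inv_left]
    exact symbol_eq_zero_of_add_eq_one (by simp [v])
  rw [← hu, ← hneg, symbol_mul_right, hv, add_zero]

theorem exists_symbol_sq_sub_eq_two_nsmul (α : Fˣ) (c : F) (h : c ^ 2 - (α : F) ≠ 0) :
    ∃ τ : K2 F, symbol α (Units.mk0 (c ^ 2 - (α : F)) h) = 2 • τ := by
  by_cases hc : c = 0
  · subst hc
    refine ⟨0, ?_⟩
    rw [show Units.mk0 _ h = -α from Units.ext (by simp), symbol_neg_self, smul_zero]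
  set u := Units.mk0 (c ^ 2 - (α : F)) h
  set d := (Units.mk0 c hc)⁻¹
  -- The Steinberg relation for `α / c²`, as `α / c² + (c² - α) / c² = 1`.
  have hst : symbol (α * d * d) (u * d * d) = 0 := symbol_eq_zero_of_add_eq_one <| by
    simp only [u, d, Units.val_mul, Units.val_inv_eq_inv_val, Units.val_mk0]
    field_simp
    ring
  refine ⟨-(symbol α d + symbol d u + 2 • symbol d d), ?_⟩
  simp only [symbol_mul_left, symbol_mul_right] at hst
  rw [← sub_eq_zero, ← hst]
  abel

end K2

open K2

theorem symbol_norm_two_divisible_general (F : Type*) [Field F] (α : Fˣ) (x y : F)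
    (hb : x ^ 2 - (α : F) * y ^ 2 ≠ 0) :
    ∃ τ : K2 F, symbol α (Units.mk0 (x ^ 2 - (α : F) * y ^ 2) hb) = 2 • τ := by
  by_cases hy : y = 0
  · have hx : x ≠ 0 := by
      rintro rfl
      simp [hy] at hb
    have hsq : Units.mk0 (x ^ 2 - (α : F) * y ^ 2) hb = Units.mk0 x hx * Units.mk0 x hx :=
      Units.ext (by simp [hy, sq])
    exact ⟨_, by rw [hsq, symbol_mul_self_right]⟩
  · have hfac : x ^ 2 - (α : F) * y ^ 2 = y * y * ((x / y) ^ 2 - (α : F)) := by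
      field_simp
    have hu : (x / y) ^ 2 - (α : F) ≠ 0 := right_ne_zero_of_mul (hfac ▸ hb)
    have hsplit : Units.mk0 (x ^ 2 - (α : F) * y ^ 2) hb =
        Units.mk0 y hy * Units.mk0 y hy * Units.mk0 ((x / y) ^ 2 - (α : F)) hu :=
      Units.ext (by simp only [Units.val_mul, Units.val_mk0, hfac])
    obtain ⟨τ, hτ⟩ := exists_symbol_sq_sub_eq_two_nsmul α (x / y) hu
    exact ⟨symbol α (Units.mk0 y hy) + τ, by
      rw [hsplit, symbol_mul_right, symbol_mul_self_right, hτ, smul_add]⟩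

/-- If `b = x² − α y² ≠ 0` with `x, y` not both zero, then `{α, b}` is divisible
by `2` in `K₂ F`. -/
theorem symbol_norm_two_divisible (F : Type*) [Field F] (α : Fˣ) (x y : F)
    (hxy : ¬ (x = 0 ∧ y = 0)) (hb : x ^ 2 - (α : F) * y ^ 2 ≠ 0) :
    ∃ τ : K2 F, symbol α (Units.mk0 (x ^ 2 - (α : F) * y ^ 2) hb) = 2 • τ :=
  symbol_norm_two_divisible_general F α x y hb
end

section
/- Let F be a field of characteristic ≠ 2 and let φ be an anisotropic quadratic form over F whose set of nonzero represented values D(φ) ⊆ F^× is closed under multiplication. If the form φ ⊥ aφ is isotropic for some a ∈ F^×, then −a ∈ D(φ). -/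
/-!
An isotropic vector `(u, v)` of `φ ⊥ aφ` has `φ u = -a φ v` with both values nonzero, by
anisotropy of `φ`. Hence `-a = φ u / φ v = (φ u φ v) / (φ v)²`, and `φ u φ v ∈ D(φ)` while
dividing a represented value by a nonzero square keeps it represented.
-/

namespace QuadraticMap

variable {F V : Type*} [Field F] [AddCommGroup V] [Module F V] {φ : QuadraticForm F V}

theorem Anisotropic.apply_snd_ne_zero_of_add_mul_eq_zero (han : φ.Anisotropic) {a : F}
    {u v : V} (huv : (u, v) ≠ 0) (h : φ u + a * φ v = 0) : φ v ≠ 0 := by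
  intro hv
  have hu : φ u = 0 := by simpa [hv] using h
  exact huv (Prod.ext (han u hu) (han v hv))

theorem exists_apply_eq_div
    (hmul : ∀ x y : F, x ≠ 0 → y ≠ 0 → (∃ u : V, φ u = x) → (∃ v : V, φ v = y) →
      ∃ w : V, φ w = x * y)
    {u v : V} (hu : φ u ≠ 0) (hv : φ v ≠ 0) : ∃ w : V, φ w = φ u / φ v := by
  obtain ⟨w, hw⟩ := hmul _ _ hu hv ⟨u, rfl⟩ ⟨v, rfl⟩
  refine ⟨(φ v)⁻¹ • w, ?_⟩
  rw [QuadraticMap.map_smul, hw, smul_eq_mul]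
  field_simp

end QuadraticMap

theorem represents_neg_of_isotropic_general (F V : Type*) [Field F]
    [AddCommGroup V] [Module F V] (φ : QuadraticForm F V)
    (han : φ.Anisotropic)
    (hmul : ∀ x y : F, x ≠ 0 → y ≠ 0 → (∃ u : V, φ u = x) → (∃ v : V, φ v = y) →
      ∃ w : V, φ w = x * y)
    (a : F) (ha : a ≠ 0)
    (hiso : ∃ p : V × V, p ≠ 0 ∧ φ p.1 + a * φ p.2 = 0) :
    ∃ v : V, φ v = -a := by
  obtain ⟨⟨u, v⟩, huv, h⟩ := hiso
  have hv := han.apply_snd_ne_zero_of_add_mul_eq_zero huv h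
  have hu_eq : φ u = -a * φ v := by linear_combination h
  have hu : φ u ≠ 0 := hu_eq ▸ mul_ne_zero (neg_ne_zero.mpr ha) hv
  obtain ⟨w, hw⟩ := QuadraticMap.exists_apply_eq_div hmul hu hv
  exact ⟨w, by rw [hw, hu_eq, mul_div_cancel_right₀ _ hv]⟩

/-- Let `φ` be an anisotropic quadratic form over a field `F` of characteristic `≠ 2`
whose set of nonzero represented values is closed under multiplication. If
`φ ⊥ aφ` is isotropic for some `a ∈ Fˣ`, then `−a` is represented by `φ`. -/
theorem represents_neg_of_isotropic (F V : Type*) [Field F] (hF : ringChar F ≠ 2)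
    [AddCommGroup V] [Module F V] (φ : QuadraticForm F V)
    (han : φ.Anisotropic)
    (hmul : ∀ x y : F, x ≠ 0 → y ≠ 0 → (∃ u : V, φ u = x) → (∃ v : V, φ v = y) →
      ∃ w : V, φ w = x * y)
    (a : F) (ha : a ≠ 0)
    (hiso : ∃ p : V × V, p ≠ 0 ∧ φ p.1 + a * φ p.2 = 0) :
    ∃ v : V, φ v = -a :=
  represents_neg_of_isotropic_general F V φ han hmul a ha hiso
end
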